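/- Let W be a non-degenerate quasi-homogeneous polynomial in N complex variables with weights q_i < 1 for each i. Then there is a constant C depending only on W such that for every (u_1,...,u_N) in C^N and every i, |u_i| ≤ C(Σ_j |∂W/∂x_j(u)| + 1)^{δ_i}, where δ_i = q_i / min_j(1 - q_j). Moreover if q_i ≤ 1/2 for all i then δ_i ≤ 1 for all i, and if q_i < 1/2 for all i then δ_i < 1 for all i. -/

import Mathlib

/-! Write `t ⋆ x = (t^{q_i} x_i)_i`. Quasi-homogeneity makes `∂_j W` scale with weight `1 - q_j ≥ m`,
where `m = min_j (1 - q_j) > 0`. Every `u ≠ 0` is `r ⋆ x` with `r > 0` and `‖x‖ = 1`, and by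
non-degeneracy and compactness `∑_j ‖∂_j W‖ ≥ ε > 0` on the unit sphere. Hence for `r ≥ 1`
we get `ε r^m ≤ ∑_j ‖∂_j W(u)‖`, and `‖u_i‖ ≤ r^{q_i} = (r^m)^{δ_i}` gives the estimate. -/

open MvPolynomial

/-- The exponent `δ_i = q_i / min_j (1 - q_j)`. -/
noncomputable def deltaExp {N : ℕ} (q : Fin N → ℝ) (i : Fin N) : ℝ :=
  q i / sInf (Set.range fun j => 1 - q j)

namespace MvPolynomial

section Rescale

variable {R σ : Type*} [CommSemiring R]

theorem eval_bind₁_C_mul_X (c y : σ → R) (p : MvPolynomial σ R) :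
    eval y (bind₁ (fun j => C (c j) * X j) p) = eval (fun j => c j * y j) p := by
  induction p using MvPolynomial.induction_on with
  | C a => simp
  | add p r hp hr => simp [hp, hr]
  | mul_X p n hp => simp [hp]

theorem pderiv_bind₁_C_mul_X (c : σ → R) (i : σ) (p : MvPolynomial σ R) :
    pderiv i (bind₁ (fun j => C (c j) * X j) p) =
      C (c i) * bind₁ (fun j => C (c j) * X j) (pderiv i p) := by
  induction p using MvPolynomial.induction_on with
  | C a => simp
  | add p r hp hr => simp only [map_add, hp, hr, mul_add]
  | mul_X p n hp =>
    rcases eq_or_ne n i with rfl | h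
    · simp only [map_mul, bind₁_X_right, pderiv_mul, hp, pderiv_X_self, pderiv_C, map_add,
        mul_one]
      ring
    · simp only [map_mul, bind₁_X_right, pderiv_mul, hp, pderiv_C, pderiv_X_of_ne h,
        mul_zero, add_zero]
      ring

end Rescale

variable {ι : Type*}

noncomputable def weightedScale (q : ι → ℝ) (lam : ℂ) (x : ι → ℂ) : ι → ℂ :=
  fun i => lam ^ (q i : ℂ) * x i

def IsQuasiHomogeneous (W : MvPolynomial ι ℂ) (q : ι → ℝ) : Prop :=
  ∀ (lam : ℂ) (x : ι → ℂ), eval (weightedScale q lam x) W = lam * eval x W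

def IsNondegenerate (W : MvPolynomial ι ℂ) : Prop :=
  ∀ x : ι → ℂ, (∀ i, eval x (pderiv i W) = 0) → x = 0

noncomputable def gradNorm [Fintype ι] (W : MvPolynomial ι ℂ) (x : ι → ℂ) : ℝ :=
  ∑ j, ‖eval x (pderiv j W)‖

theorem norm_weightedScale_apply (q : ι → ℝ) {t : ℝ} (ht : 0 < t) (x : ι → ℂ) (i : ι) :
    ‖weightedScale q t x i‖ = t ^ q i * ‖x i‖ := by
  rw [weightedScale, norm_mul, Complex.norm_cpow_eq_rpow_re_of_pos ht, Complex.ofReal_re]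

theorem exists_weightedScale_eq [Fintype ι] {q : ι → ℝ} (hq : ∀ i, 0 < q i) {u : ι → ℂ}
    (hu : u ≠ 0) : ∃ r : ℝ, 0 < r ∧ ∃ x : ι → ℂ, ‖x‖ = 1 ∧ weightedScale q r x = u := by
  obtain ⟨i₀, hi₀⟩ : ∃ i, u i ≠ 0 := Function.ne_iff.mp hu
  have : Nonempty ι := ⟨i₀⟩
  obtain ⟨k, hk⟩ := Finite.exists_max fun j => ‖u j‖ ^ (q j)⁻¹
  set r := ‖u k‖ ^ (q k)⁻¹
  have hr : 0 < r := (by positivity : 0 < ‖u i₀‖ ^ (q i₀)⁻¹).trans_le (hk i₀)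
  have hur : ∀ j, ‖u j‖ ≤ r ^ q j := fun j => by
    simpa only [Real.rpow_inv_rpow (norm_nonneg _) (hq j).ne'] using
      Real.rpow_le_rpow (by positivity) (hk j) (hq j).le
  have hcpow : ∀ j, ((r : ℂ) ^ (q j : ℂ)) ≠ 0 := fun j =>
    (Complex.cpow_ne_zero_iff_of_exponent_ne_zero (by exact_mod_cast (hq j).ne')).mpr
      (by exact_mod_cast hr.ne')
  set x : ι → ℂ := fun j => ((r : ℂ) ^ (q j : ℂ))⁻¹ * u j
  have hx : ∀ j, ‖x j‖ = ‖u j‖ / r ^ q j := fun j => by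
    rw [norm_mul, norm_inv, Complex.norm_cpow_eq_rpow_re_of_pos hr, Complex.ofReal_re,
      inv_mul_eq_div]
  have hrk : r ^ q k = ‖u k‖ := Real.rpow_inv_rpow (norm_nonneg _) (hq k).ne'
  refine ⟨r, hr, x, le_antisymm ?_ ?_, ?_⟩
  · exact (pi_norm_le_iff_of_nonneg zero_le_one).mpr fun j => by
      rw [hx, div_le_one (by positivity)]
      exact hur j
  · calc (1 : ℝ) = ‖x k‖ := by
          rw [hx, hrk, div_self (hrk ▸ by positivity)]
      _ ≤ ‖x‖ := norm_le_pi_norm x k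
  · ext j
    exact mul_inv_cancel_left₀ (hcpow j) (u j)

namespace IsQuasiHomogeneous

variable {W : MvPolynomial ι ℂ} {q : ι → ℝ}

theorem cpow_mul_eval_pderiv (hW : IsQuasiHomogeneous W q) (lam : ℂ) (x : ι → ℂ) (i : ι) :
    lam ^ (q i : ℂ) * eval (weightedScale q lam x) (pderiv i W) = lam * eval x (pderiv i W) := by
  have hpoly : bind₁ (fun j => C (lam ^ (q j : ℂ)) * X j) W = C lam * W :=
    MvPolynomial.funext fun y => by
      rw [eval_bind₁_C_mul_X, eval_mul, eval_C]
      exact hW lam y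
  have h := congrArg (eval x ∘ pderiv i) hpoly
  simp only [Function.comp_apply, pderiv_bind₁_C_mul_X, pderiv_C_mul, eval_mul, eval_C,
    eval_bind₁_C_mul_X] at h
  exact h

theorem norm_eval_pderiv_weightedScale (hW : IsQuasiHomogeneous W q) {t : ℝ} (ht : 0 < t)
    (x : ι → ℂ) (i : ι) :
    ‖eval (weightedScale q t x) (pderiv i W)‖ = t ^ (1 - q i) * ‖eval x (pderiv i W)‖ := by
  have h := congrArg norm (hW.cpow_mul_eval_pderiv t x i)
  rw [norm_mul, norm_mul, Complex.norm_cpow_eq_rpow_re_of_pos ht, Complex.ofReal_re,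
    Complex.norm_real, Real.norm_of_nonneg ht.le] at h
  rw [Real.rpow_sub ht, Real.rpow_one, div_mul_eq_mul_div, eq_div_iff (by positivity), ← h,
    mul_comm]

theorem rpow_mul_gradNorm_le [Fintype ι] (hW : IsQuasiHomogeneous W q) {m t : ℝ}
    (hm : ∀ j, m ≤ 1 - q j) (ht : 1 ≤ t) (x : ι → ℂ) :
    t ^ m * gradNorm W x ≤ gradNorm W (weightedScale q t x) := by
  simp only [gradNorm, Finset.mul_sum, hW.norm_eval_pderiv_weightedScale (by positivity : 0 < t)]
  gcongr with j
  exact hm j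

end IsQuasiHomogeneous

theorem gradNorm_nonneg [Fintype ι] (W : MvPolynomial ι ℂ) (x : ι → ℂ) : 0 ≤ gradNorm W x :=
  Finset.sum_nonneg fun _ _ => norm_nonneg _

theorem continuous_gradNorm [Fintype ι] (W : MvPolynomial ι ℂ) : Continuous (gradNorm W) :=
  continuous_finsetSum _ fun j _ => (continuous_eval (pderiv j W)).norm

namespace IsNondegenerate

variable [Fintype ι] {W : MvPolynomial ι ℂ}

theorem gradNorm_pos (hW : IsNondegenerate W) {x : ι → ℂ} (hx : x ≠ 0) : 0 < gradNorm W x := by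
  refine (gradNorm_nonneg W x).lt_of_ne fun h => hx (hW x fun i => ?_)
  exact norm_eq_zero.mp <|
    (Finset.sum_eq_zero_iff_of_nonneg fun j _ => norm_nonneg _).mp h.symm i (Finset.mem_univ i)

theorem exists_pos_le_gradNorm (hW : IsNondegenerate W) :
    ∃ ε, 0 < ε ∧ ε ≤ 1 ∧ ∀ x : ι → ℂ, ‖x‖ = 1 → ε ≤ gradNorm W x := by
  obtain ⟨ε, hε, hle⟩ := (isCompact_sphere (0 : ι → ℂ) 1).exists_forall_le'
    (continuous_gradNorm W).continuousOn fun x hx =>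
      hW.gradNorm_pos (ne_zero_of_mem_unit_sphere ⟨x, hx⟩)
  exact ⟨min ε 1, by positivity, min_le_right _ _, fun x hx =>
    (min_le_left _ _).trans (hle x (by simpa using hx))⟩

theorem exists_norm_le_mul_gradNorm_add_one_rpow (hnd : IsNondegenerate W) {q : ι → ℝ}
    (hW : IsQuasiHomogeneous W q) (hq : ∀ i, 0 < q i) {m : ℝ} (hm0 : 0 < m)
    (hm : ∀ i, m ≤ 1 - q i) :
    ∃ C, 0 < C ∧ ∀ (u : ι → ℂ) (i : ι), ‖u i‖ ≤ C * (gradNorm W u + 1) ^ (q i / m) := by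
  obtain ⟨ε, hε0, hε1, hε⟩ := hnd.exists_pos_le_gradNorm
  refine ⟨ε⁻¹ ^ m⁻¹, by positivity, fun u i => ?_⟩
  rcases eq_or_ne u 0 with rfl | hu
  · have hS := gradNorm_nonneg W 0
    simp only [Pi.zero_apply, norm_zero]
    positivity
  obtain ⟨r, hr, x, hx, rfl⟩ := exists_weightedScale_eq hq hu
  set S := gradNorm W (weightedScale q r x)
  have hS : 0 ≤ S := gradNorm_nonneg W _
  have hrm : r ^ m ≤ (S + 1) / ε := by
    rw [le_div_iff₀ hε0]
    rcases le_total r 1 with hr1 | hr1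
    · calc r ^ m * ε ≤ 1 * 1 := by gcongr; exact Real.rpow_le_one hr.le hr1 hm0.le
        _ ≤ S + 1 := by linarith
    · calc r ^ m * ε ≤ r ^ m * gradNorm W x := by gcongr; exact hε x hx
        _ ≤ S := hW.rpow_mul_gradNorm_le hm hr1 x
        _ ≤ S + 1 := by linarith
  have hqm : q i / m ≤ m⁻¹ := by
    rw [div_eq_mul_inv]
    exact mul_le_of_le_one_left (by positivity) (by linarith [hm i])
  calc ‖weightedScale q r x i‖ ≤ r ^ q i := by
        rw [norm_weightedScale_apply q hr]
        exact mul_le_of_le_one_right (by positivity) (hx ▸ norm_le_pi_norm x i)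
    _ = (r ^ m) ^ (q i / m) := by rw [← Real.rpow_mul hr.le, mul_div_cancel₀ _ hm0.ne']
    _ ≤ ((S + 1) / ε) ^ (q i / m) := by gcongr; exact div_nonneg (hq i).le hm0.le
    _ = ε⁻¹ ^ (q i / m) * (S + 1) ^ (q i / m) := by
        rw [div_eq_inv_mul, Real.mul_rpow (by positivity) (by positivity)]
    _ ≤ ε⁻¹ ^ m⁻¹ * (S + 1) ^ (q i / m) := by
        gcongr
        exact (one_le_inv₀ hε0).mpr hε1

end IsNondegenerate

end MvPolynomial

section Exponent

variable {ι : Type*} [Finite ι] (q : ι → ℝ)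

theorem sInf_range_one_sub_le (j : ι) : sInf (Set.range fun j => 1 - q j) ≤ 1 - q j :=
  ciInf_le (Finite.bddBelow_range _) j

theorem exists_one_sub_eq_sInf_range [Nonempty ι] :
    ∃ j, 1 - q j = sInf (Set.range fun j => 1 - q j) :=
  exists_eq_ciInf_of_finite

theorem sInf_range_one_sub_pos [Nonempty ι] {q : ι → ℝ} (hq : ∀ i, q i < 1) :
    0 < sInf (Set.range fun j => 1 - q j) := by
  obtain ⟨j, hj⟩ := exists_one_sub_eq_sInf_range q
  linarith [hq j]

end Exponent

theorem deltaExp_le_one {N : ℕ} {q : Fin N → ℝ} (hq : ∀ i, q i ≤ 1 / 2) (i : Fin N) :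
    deltaExp q i ≤ 1 := by
  have : Nonempty (Fin N) := ⟨i⟩
  obtain ⟨j, hj⟩ := exists_one_sub_eq_sInf_range q
  rw [deltaExp, div_le_one (sInf_range_one_sub_pos fun k => by linarith [hq k]), ← hj]
  linarith [hq i, hq j]

theorem deltaExp_lt_one {N : ℕ} {q : Fin N → ℝ} (hq : ∀ i, q i < 1 / 2) (i : Fin N) :
    deltaExp q i < 1 := by
  have : Nonempty (Fin N) := ⟨i⟩
  obtain ⟨j, hj⟩ := exists_one_sub_eq_sInf_range q
  rw [deltaExp, div_lt_one (sInf_range_one_sub_pos fun k => by linarith [hq k]), ← hj]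
  linarith [hq i, hq j]

theorem witten_degenerate_estimate_general {N : ℕ}
    (W : MvPolynomial (Fin N) ℂ) (q : Fin N → ℝ)
    (hq : ∀ i, 0 < q i ∧ q i < 1)
    (hquasi : ∀ (lam : ℂ) (x : Fin N → ℂ),
      eval (fun i => lam ^ (q i : ℂ) * x i) W = lam * eval x W)
    (hnondeg : ∀ x : Fin N → ℂ, (∀ i, eval x (pderiv i W) = 0) → x = 0) :
    (∃ C : ℝ, 0 < C ∧ ∀ (u : Fin N → ℂ) (i : Fin N),
        ‖u i‖ ≤ C * (∑ j, ‖eval u (pderiv j W)‖ + 1) ^ deltaExp q i) ∧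
    ((∀ i, q i ≤ 1 / 2) → ∀ i, deltaExp q i ≤ 1) ∧
    ((∀ i, q i < 1 / 2) → ∀ i, deltaExp q i < 1) := by
  refine ⟨?_, deltaExp_le_one, deltaExp_lt_one⟩
  rcases isEmpty_or_nonempty (Fin N) with hN | hN
  · exact ⟨1, one_pos, fun _ i => isEmptyElim i⟩
  exact IsNondegenerate.exists_norm_le_mul_gradNorm_add_one_rpow hnondeg hquasi
    (fun i => (hq i).1) (sInf_range_one_sub_pos fun i => (hq i).2) (sInf_range_one_sub_le q)

/-- For a non-degenerate quasi-homogeneous polynomial `W` with weights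
`q i < 1`, there is a constant `C > 0` such that
`‖u i‖ ≤ C (∑ j ‖∂W/∂x_j (u)‖ + 1) ^ δ_i` for all `u`, where
`δ_i = q_i / min_j (1 - q_j)`; moreover `δ_i ≤ 1` if all `q_i ≤ 1/2` and
`δ_i < 1` if all `q_i < 1/2`. -/
theorem witten_degenerate_estimate {N : ℕ} (hN : 0 < N)
    (W : MvPolynomial (Fin N) ℂ) (q : Fin N → ℝ)
    (hq : ∀ i, 0 < q i ∧ q i < 1)
    (hquasi : ∀ (lam : ℂ) (x : Fin N → ℂ),
      eval (fun i => lam ^ (q i : ℂ) * x i) W = lam * eval x W)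
    (hnondeg : ∀ x : Fin N → ℂ, (∀ i, eval x (pderiv i W) = 0) → x = 0) :
    (∃ C : ℝ, 0 < C ∧ ∀ (u : Fin N → ℂ) (i : Fin N),
        ‖u i‖ ≤ C * (∑ j, ‖eval u (pderiv j W)‖ + 1) ^ deltaExp q i) ∧
    ((∀ i, q i ≤ 1 / 2) → ∀ i, deltaExp q i ≤ 1) ∧
    ((∀ i, q i < 1 / 2) → ∀ i, deltaExp q i < 1) :=
  witten_degenerate_estimate_general W q hq hquasi hnondeg
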